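/- arXiv:0803.1931 — 2 statements merged into one kernel-verified Lean document; each statement's English description precedes it below -/
import Mathlib

section
/- For any penalty p : [0, ∞) → ℝ that is differentiable on (0, ∞) with p' nonincreasing and nonnegative (i.e., p concave and nondecreasing), the local quadratic approximation q(β) = p(|β₀|) + (1/2)(p'(|β₀|)/|β₀|)(β² − β₀²) majorizes p: q(β) ≥ p(|β|) for all β ∈ ℝ, with equality at |β| = |β₀|. -/
/-!
A concave function lies below each of its tangent lines, so
`p t ≤ p a + p' a * (t - a)` for `t ≥ 0` and `a = |β₀|`. For `c = p' a ≥ 0` the quadratic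
`c / (2a) * (t² - a²)` exceeds the tangent term `c * (t - a)` by `c / (2a) * (t - a)² ≥ 0`;
taking `t = |β|` gives the majorization, and both sides agree at `|β| = |β₀|`.
-/

open Set

theorem ConcaveOn.le_add_mul_sub_of_hasDerivAt {S : Set ℝ} {f : ℝ → ℝ} {f' x y : ℝ}
    (hf : ConcaveOn ℝ S f) (hx : x ∈ S) (hy : y ∈ S) (hf' : HasDerivAt f f' x) :
    f y ≤ f x + f' * (y - x) := by
  rcases lt_trichotomy x y with hxy | rfl | hyx
  · have hslope := hf.slope_le_of_hasDerivAt hx hy hxy hf'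
    rw [slope_def_field, div_le_iff₀ (sub_pos.mpr hxy)] at hslope
    linarith
  · simp
  · have hslope := hf.le_slope_of_hasDerivAt hy hx hyx hf'
    rw [slope_def_field, le_div_iff₀ (sub_pos.mpr hyx)] at hslope
    linarith

theorem concaveOn_Ici_of_hasDerivAt_of_antitoneOn {f f' : ℝ → ℝ} {a : ℝ}
    (hcont : ContinuousOn f (Ici a)) (hderiv : ∀ x, a < x → HasDerivAt f (f' x) x)
    (hanti : AntitoneOn f' (Ioi a)) : ConcaveOn ℝ (Ici a) f := by
  have hderiv_eq : EqOn f' (deriv f) (Ioi a) := fun x hx => (hderiv x hx).deriv.symm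
  refine AntitoneOn.concaveOn_of_deriv (convex_Ici a) hcont ?_ ?_ <;> rw [interior_Ici]
  · exact fun x hx => (hderiv x hx).differentiableAt.differentiableWithinAt
  · exact hanti.congr hderiv_eq

theorem mul_sub_le_half_div_mul_sq_sub_sq {a c : ℝ} (ha : 0 < a) (hc : 0 ≤ c) (t : ℝ) :
    c * (t - a) ≤ 1 / 2 * (c / a) * (t ^ 2 - a ^ 2) := by
  have hgap : 1 / 2 * (c / a) * (t ^ 2 - a ^ 2) - c * (t - a) = c / a * (t - a) ^ 2 / 2 := by
    field_simp
    ring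
  have : 0 ≤ c / a * (t - a) ^ 2 / 2 := by positivity
  linarith

/-- For a concave nondecreasing penalty `p` (differentiable on `(0,∞)` with nonnegative
nonincreasing derivative `p'`), the local quadratic approximation
`q(β) = p(|β₀|) + (1/2)(p'(|β₀|)/|β₀|)(β² − β₀²)` majorizes `p(|·|)`,
with equality when `|β| = |β₀|`. -/
theorem lqa_majorizes_concave_penalty
    (p p' : ℝ → ℝ)
    (hcont : ContinuousOn p (Set.Ici (0:ℝ)))
    (hderiv : ∀ x : ℝ, 0 < x → HasDerivAt p (p' x) x)
    (hnonneg : ∀ x : ℝ, 0 < x → 0 ≤ p' x)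
    (hanti : AntitoneOn p' (Set.Ioi (0:ℝ)))
    (β₀ : ℝ) (hβ₀ : β₀ ≠ 0)
    (q : ℝ → ℝ)
    (hq : ∀ β : ℝ, q β = p |β₀| + (1/2) * (p' |β₀| / |β₀|) * (β ^ 2 - β₀ ^ 2)) :
    (∀ β : ℝ, p |β| ≤ q β) ∧ (∀ β : ℝ, |β| = |β₀| → q β = p |β|) := by
  have ha : 0 < |β₀| := abs_pos.mpr hβ₀
  have hconcave := concaveOn_Ici_of_hasDerivAt_of_antitoneOn hcont hderiv hanti
  refine ⟨fun β => ?_, fun β hβ => ?_⟩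
  · have htangent : p |β| ≤ p |β₀| + p' |β₀| * (|β| - |β₀|) :=
      hconcave.le_add_mul_sub_of_hasDerivAt ha.le (abs_nonneg β) (hderiv _ ha)
    have hquad := mul_sub_le_half_div_mul_sq_sub_sq ha (hnonneg _ ha) |β|
    rw [sq_abs, sq_abs] at hquad
    rw [hq]
    linarith
  · have hsq : β ^ 2 = β₀ ^ 2 := by rw [← sq_abs β, hβ, sq_abs]
    rw [hq, hsq, hβ]
    ring
end

section
/- For the SCAD penalty with a > 2, the one-dimensional penalized least squares problem min_β (1/2)(z − β)² + p_λ(|β|) has solution: β̂ = sgn(z)(|z| − λ)_+ when |z| ≤ 2λ; β̂ = ((a−1)z − sgn(z)aλ)/(a−2) when 2λ < |z| ≤ aλ; and β̂ = z when |z| > aλ. -/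
private lemma scad_frac (a lam z b : ℝ) (ha1 : a - 1 ≠ 0) :
    (1/2) * (z - b) ^ 2 + (2 * a * lam * b - b ^ 2 - lam ^ 2) / (2 * (a - 1))
      = ((a - 1) * (z - b) ^ 2 + (2 * a * lam * b - b ^ 2 - lam ^ 2)) / (2 * (a - 1)) := by
  field_simp

set_option maxHeartbeats 1000000 in
private lemma scad_core (lam a z : ℝ) (hlam : 0 < lam) (ha : 2 < a) (hz : 0 ≤ z)
    (p : ℝ → ℝ)
    (hp1 : ∀ β : ℝ, 0 ≤ β → β ≤ lam → p β = lam * β)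
    (hp2 : ∀ β : ℝ, lam < β → β ≤ a * lam →
      p β = (2 * a * lam * β - β ^ 2 - lam ^ 2) / (2 * (a - 1)))
    (hp3 : ∀ β : ℝ, a * lam < β → p β = (a + 1) * lam ^ 2 / 2)
    (f : ℝ → ℝ)
    (hf : ∀ β : ℝ, f β = (1/2) * (z - β) ^ 2 + p |β|) :
    (z ≤ 2 * lam → ∀ β : ℝ, f (max (z - lam) 0) ≤ f β) ∧
    (2 * lam < z → z ≤ a * lam → ∀ β : ℝ, f (((a - 1) * z - a * lam) / (a - 2)) ≤ f β) ∧
    (a * lam < z → ∀ β : ℝ, f z ≤ f β) := by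
  have ha1 : (0:ℝ) < a - 1 := by linarith
  have ha2 : (0:ℝ) < a - 2 := by linarith
  have hD : (0:ℝ) < 2 * (a - 1) := by linarith
  have hD2 : (0:ℝ) < 2 * (a - 2) := by linarith
  have hred : ∀ t : ℝ, (∀ b : ℝ, 0 ≤ b → f t ≤ f b) → ∀ β : ℝ, f t ≤ f β := by
    intro t h β
    calc f t ≤ f |β| := h _ (abs_nonneg β)
      _ ≤ f β := by
        rw [hf, hf, abs_abs]
        rcases le_or_gt 0 β with hβ | hβ
        · rw [abs_of_nonneg hβ]
        · rw [abs_of_neg hβ]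
          nlinarith [mul_nonneg hz (neg_nonneg.2 hβ.le)]
  refine ⟨?_, ?_, ?_⟩
  · -- case 1 : z ≤ 2 lam
    intro hz2
    rcases le_or_gt z lam with hzl | hzl
    · have ht : max (z - lam) 0 = 0 := max_eq_right (by linarith)
      rw [ht]
      apply hred
      intro b hb
      have eL : f 0 = 1/2 * z ^ 2 := by
        rw [hf, abs_zero, hp1 0 le_rfl hlam.le]; ring
      rw [eL, hf, abs_of_nonneg hb]
      rcases le_or_gt b lam with hb1 | hb1
      · rw [hp1 b hb hb1]
        nlinarith [mul_nonneg hb (by linarith : (0:ℝ) ≤ lam - z)]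
      rcases le_or_gt b (a * lam) with hb2 | hb2
      · rw [hp2 b hb1 hb2, scad_frac a lam z b (ne_of_gt ha1), le_div_iff₀ hD]
        nlinarith [mul_nonneg (sub_nonneg.2 hzl) (sub_nonneg.2 hb1.le), sq_nonneg (b - lam),
          mul_pos hlam (sub_pos.2 hb1),
          mul_nonneg (mul_nonneg ha2.le (by linarith : (0:ℝ) ≤ b)) (sub_nonneg.2 hb1.le)]
      · rw [hp3 b hb2]
        nlinarith [mul_nonneg (by nlinarith : (0:ℝ) ≤ b - a * lam)
            (by nlinarith : (0:ℝ) ≤ b + a * lam - 2 * z),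
          mul_pos hlam hlam, sq_nonneg (a * lam - lam),
          mul_nonneg (mul_nonneg ha2.le hlam.le) hlam.le]
    · have ht : max (z - lam) 0 = z - lam := max_eq_left (by linarith)
      rw [ht]
      apply hred
      intro b hb
      have eL : f (z - lam) = 1/2 * lam ^ 2 + lam * (z - lam) := by
        rw [hf, abs_of_nonneg (by linarith), hp1 _ (by linarith) (by linarith)]; ring
      rw [eL, hf, abs_of_nonneg hb]
      rcases le_or_gt b lam with hb1 | hb1
      · rw [hp1 b hb hb1]
        nlinarith [sq_nonneg (b - (z - lam))]
      rcases le_or_gt b (a * lam) with hb2 | hb2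
      · rw [hp2 b hb1 hb2, scad_frac a lam z b (ne_of_gt ha1), le_div_iff₀ hD]
        nlinarith [mul_nonneg (sub_nonneg.2 hb1.le)
            (mul_nonneg ha1.le (by linarith : (0:ℝ) ≤ 2 * lam - z)),
          mul_nonneg ha2.le (sq_nonneg (b - lam)),
          mul_nonneg ha1.le (sq_nonneg (z - 2 * lam))]
      · rw [hp3 b hb2]
        nlinarith [sq_nonneg (z - b), mul_nonneg hlam.le (by linarith : (0:ℝ) ≤ 2 * lam - z),
          mul_nonneg ha2.le (mul_pos hlam hlam).le]
  · -- case 2 : 2 lam < z ≤ a lam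
    intro hz1 hz2
    set t := ((a - 1) * z - a * lam) / (a - 2) with htdef
    have hlt : lam < t := by
      rw [htdef, lt_div_iff₀ ha2]; nlinarith
    have htl : t ≤ a * lam := by
      rw [htdef, div_le_iff₀ ha2]; nlinarith
    have ht0 : 0 ≤ t := le_trans hlam.le hlt.le
    apply hred
    intro b hb
    have eL : f t = (2 * a * lam * z - z ^ 2 - (a + 2) * lam ^ 2) / (2 * (a - 2)) := by
      rw [hf, abs_of_nonneg ht0, hp2 t hlt htl, htdef]
      field_simp
      ring
    rw [eL, hf, abs_of_nonneg hb]
    rcases le_or_gt b lam with hb1 | hb1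
    · rw [hp1 b hb hb1, div_le_iff₀ hD2]
      nlinarith [mul_nonneg ha1.le (sq_nonneg (z - 2 * lam)),
        mul_nonneg ha2.le (mul_nonneg (sub_nonneg.2 hb1) (by nlinarith : (0:ℝ) ≤ 2 * z - b - 3 * lam))]
    rcases le_or_gt b (a * lam) with hb2 | hb2
    · rw [hp2 b hb1 hb2, scad_frac a lam z b (ne_of_gt ha1), div_le_div_iff₀ hD2 hD]
      nlinarith [sq_nonneg ((a - 2) * b - (a - 1) * z + a * lam)]
    · rw [hp3 b hb2, div_le_iff₀ hD2]
      nlinarith [mul_nonneg ha1.le (sq_nonneg (z - a * lam)),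
        mul_nonneg ha2.le (mul_nonneg (by nlinarith : (0:ℝ) ≤ b - a * lam)
          (by nlinarith : (0:ℝ) ≤ b + a * lam - 2 * z))]
  · -- case 3 : a lam < z
    intro hz1
    apply hred
    intro b hb
    have eL : f z = (a + 1) * lam ^ 2 / 2 := by
      rw [hf, abs_of_nonneg hz, hp3 z hz1]; ring
    rw [eL, hf, abs_of_nonneg hb]
    rcases le_or_gt b lam with hb1 | hb1
    · rw [hp1 b hb hb1]
      nlinarith [mul_nonneg (sub_nonneg.2 hb1) (by nlinarith : (0:ℝ) ≤ 2 * z - 3 * lam - b),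
        mul_nonneg (by nlinarith : (0:ℝ) ≤ z - a * lam) (by nlinarith : (0:ℝ) ≤ z + (a - 2) * lam),
        mul_nonneg (mul_nonneg ha1.le ha2.le) (mul_pos hlam hlam).le]
    rcases le_or_gt b (a * lam) with hb2 | hb2
    · rw [hp2 b hb1 hb2, scad_frac a lam z b (ne_of_gt ha1), le_div_iff₀ hD]
      nlinarith [mul_nonneg (sub_nonneg.2 hb2)
          (by nlinarith : (0:ℝ) ≤ 2 * (a - 1) * z - (a - 2) * (b + a * lam) - 2 * a * lam),
        mul_nonneg ha1.le (sq_nonneg (z - a * lam))]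
    · rw [hp3 b hb2]
      nlinarith [sq_nonneg (z - b)]

/-- The SCAD-penalized one-dimensional least squares problem
`min_β (1/2)(z − β)² + p_λ(|β|)` has the solution given by the SCAD thresholding rule. -/
theorem scad_threshold_solution
    (lam a z : ℝ) (hlam : 0 < lam) (ha : 2 < a)
    (p : ℝ → ℝ)
    (hp1 : ∀ β : ℝ, 0 ≤ β → β ≤ lam → p β = lam * β)
    (hp2 : ∀ β : ℝ, lam < β → β ≤ a * lam →
      p β = (2 * a * lam * β - β ^ 2 - lam ^ 2) / (2 * (a - 1)))
    (hp3 : ∀ β : ℝ, a * lam < β → p β = (a + 1) * lam ^ 2 / 2)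
    (f : ℝ → ℝ)
    (hf : ∀ β : ℝ, f β = (1/2) * (z - β) ^ 2 + p |β|) :
    (|z| ≤ 2 * lam → ∀ β : ℝ, f (Real.sign z * max (|z| - lam) 0) ≤ f β) ∧
    (2 * lam < |z| → |z| ≤ a * lam →
      ∀ β : ℝ, f (((a - 1) * z - Real.sign z * (a * lam)) / (a - 2)) ≤ f β) ∧
    (a * lam < |z| → ∀ β : ℝ, f z ≤ f β) := by
  rcases le_or_gt 0 z with hz | hz
  · obtain ⟨c1, c2, c3⟩ := scad_core lam a z hlam ha hz p hp1 hp2 hp3 f hf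
    have hza : |z| = z := abs_of_nonneg hz
    rcases eq_or_lt_of_le hz with hz0 | hz0
    · refine ⟨?_, ?_, ?_⟩
      · intro h β
        have e : Real.sign z * max (|z| - lam) 0 = max (z - lam) 0 := by
          rw [← hz0, abs_zero, Real.sign_zero, zero_mul, zero_sub]
          exact (max_eq_right (by linarith : -lam ≤ (0:ℝ))).symm
        rw [e]; exact c1 (by rwa [hza] at h) β
      · intro h1 _; rw [hza] at h1; exact absurd h1 (by nlinarith)
      · intro h1; rw [hza] at h1; exact absurd h1 (by nlinarith)
    · have hs : Real.sign z = 1 := Real.sign_of_pos hz0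
      refine ⟨?_, ?_, ?_⟩
      · intro h β
        rw [hs, hza, one_mul]; exact c1 (by rwa [hza] at h) β
      · intro h1 h2 β
        rw [hs, one_mul]; exact c2 (by rwa [hza] at h1) (by rwa [hza] at h2) β
      · intro h1 β
        exact c3 (by rwa [hza] at h1) β
  · have hs : Real.sign z = -1 := Real.sign_of_neg hz
    have hza : |z| = -z := abs_of_neg hz
    have hf' : ∀ β : ℝ, (fun β => f (-β)) β = (1/2) * (-z - β) ^ 2 + p |β| := by
      intro β
      simp only
      rw [hf (-β), abs_neg]
      ring_nf
    obtain ⟨c1, c2, c3⟩ := scad_core lam a (-z) hlam ha (by linarith) p hp1 hp2 hp3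
      (fun β => f (-β)) hf'
    refine ⟨?_, ?_, ?_⟩
    · intro h β
      have e : Real.sign z * max (|z| - lam) 0 = -(max (-z - lam) 0) := by
        rw [hs, hza]; ring
      rw [e]
      have := c1 (by rwa [hza] at h) (-β)
      simpa using this
    · intro h1 h2 β
      have e : ((a - 1) * z - Real.sign z * (a * lam)) / (a - 2)
          = -(((a - 1) * (-z) - a * lam) / (a - 2)) := by
        rw [hs]; ring
      rw [e]
      have := c2 (by rwa [hza] at h1) (by rwa [hza] at h2) (-β)
      simpa using this
    · intro h1 β
      have := c3 (by rwa [hza] at h1) (-β)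
      simpa using this
end
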